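/- arXiv:2507.12398 — 3 statements merged into one kernel-verified Lean document; each statement's English description precedes it below -/
import Mathlib

section
/- A round sphere of radius R > 0 centered at a point c ∈ R^3 is an α-stationary surface (for some α ≠ 0, with 0 not on the sphere when required) if and only if either α = −2 and c = 0, or α = −4 and |c| = R (i.e., the sphere passes through the origin). -/
open RealInnerProductSpace

/-- A round sphere of radius `R > 0` centered at `c`, with inward unit normal
`N(p) = (c - p)/R` and mean curvature `H = 2/R` (sum of the principal curvatures),
is an α-stationary surface (`H(p) = α⟪N(p), p⟫/‖p‖²` at every point `p ≠ 0` of the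
sphere) for `α ≠ 0` if and only if either `α = -2` and the sphere is centered at the
origin, or `α = -4` and the sphere passes through the origin (`‖c‖ = R`). -/
theorem sphere_alpha_stationary_iff (α R : ℝ) (hα : α ≠ 0) (hR : 0 < R)
    (c : EuclideanSpace ℝ (Fin 3)) :
    (∀ p : EuclideanSpace ℝ (Fin 3), ‖p - c‖ = R → p ≠ 0 →
        (2 / R : ℝ) = α * ⟪R⁻¹ • (c - p), p⟫ / ‖p‖ ^ 2) ↔
      ((α = -2 ∧ c = 0) ∨ (α = -4 ∧ ‖c‖ = R)) := by
  have hR' : R ≠ 0 := ne_of_gt hR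
  have hinner : ∀ p : EuclideanSpace ℝ (Fin 3), ‖p - c‖ = R →
      ⟪c - p, p⟫ = (‖c‖ ^ 2 - R ^ 2 - ‖p‖ ^ 2) / 2 := by
    intro p hp
    have h1 : ‖p - c‖ ^ 2 = ‖p‖ ^ 2 - 2 * ⟪p, c⟫ + ‖c‖ ^ 2 := norm_sub_sq_real p c
    rw [hp] at h1
    have h2 : ⟪c - p, p⟫ = ⟪c, p⟫ - ‖p‖ ^ 2 := by
      rw [inner_sub_left, real_inner_self_eq_norm_sq]
    have h3 : ⟪p, c⟫ = ⟪c, p⟫ := real_inner_comm c p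
    linarith
  constructor
  · intro h
    have key : ∀ p : EuclideanSpace ℝ (Fin 3), ‖p - c‖ = R → p ≠ 0 →
        (4 + α) * ‖p‖ ^ 2 = α * (‖c‖ ^ 2 - R ^ 2) := by
      intro p hp hp0
      have heq := h p hp hp0
      rw [real_inner_smul_left, hinner p hp] at heq
      have hpn : (0:ℝ) < ‖p‖ := norm_pos_iff.mpr hp0
      have hpn' : ‖p‖ ≠ 0 := ne_of_gt hpn
      field_simp at heq
      nlinarith [heq]
    by_cases hc : c = 0
    · left
      refine ⟨?_, hc⟩
      subst hc
      set p : EuclideanSpace ℝ (Fin 3) := (R : ℝ) • EuclideanSpace.single 0 1 with hpdef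
      have hpn : ‖p‖ = R := by
        rw [hpdef, norm_smul, EuclideanSpace.norm_single]
        simp [abs_of_pos hR]
      have hp0 : p ≠ 0 := by
        intro h0
        rw [h0, norm_zero] at hpn
        exact hR' hpn.symm
      have hps : ‖p - 0‖ = R := by simpa using hpn
      have hk := key p hps hp0
      rw [hpn] at hk
      simp only [norm_zero] at hk
      have hR2 : (0:ℝ) < R ^ 2 := by positivity
      nlinarith [hk]
    · have hc0 : (0:ℝ) < ‖c‖ := norm_pos_iff.mpr hc
      set t : ℝ := R / ‖c‖ with htdef
      have ht : 0 < t := div_pos hR hc0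
      have htc : t * ‖c‖ = R := div_mul_cancel₀ R (ne_of_gt hc0)
      have hpplus : ‖((1 + t) • c) - c‖ = R := by
        have : ((1 + t) • c) - c = t • c := by module
        rw [this, norm_smul, Real.norm_eq_abs, abs_of_pos ht, htc]
      have hpplusnorm : ‖(1 + t) • c‖ = ‖c‖ + R := by
        rw [norm_smul, Real.norm_eq_abs, abs_of_pos (by linarith)]
        nlinarith [htc]
      have hpplus0 : ((1 + t) • c) ≠ 0 := by
        intro h0
        rw [h0, norm_zero] at hpplusnorm
        nlinarith
      have hk1 := key _ hpplus hpplus0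
      rw [hpplusnorm] at hk1
      by_cases hcR : ‖c‖ = R
      · right
        refine ⟨?_, hcR⟩
        rw [hcR] at hk1
        have : α * (R ^ 2 - R ^ 2) = 0 := by ring
        rw [this] at hk1
        have hR2 : (0:ℝ) < R ^ 2 := by positivity
        nlinarith [hk1]
      · exfalso
        have ht1 : t ≠ 1 := by
          intro h1
          apply hcR
          rw [h1, one_mul] at htc
          exact htc
        have hpminus : ‖((1 - t) • c) - c‖ = R := by
          have : ((1 - t) • c) - c = (-t) • c := by module
          rw [this, norm_smul, Real.norm_eq_abs, abs_neg, abs_of_pos ht, htc]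
        have hpminusnorm : ‖(1 - t) • c‖ ^ 2 = (‖c‖ - R) ^ 2 := by
          rw [norm_smul, Real.norm_eq_abs, mul_pow, sq_abs]
          nlinarith [htc]
        have hpminus0 : ((1 - t) • c) ≠ 0 := by
          intro h0
          apply ht1
          have := smul_eq_zero.mp h0
          rcases this with h | h
          · linarith [sub_eq_zero.mp (by linarith : (1:ℝ) - t = 0)]
          · exact absurd h hc
        have hk2 := key _ hpminus hpminus0
        rw [hpminusnorm] at hk2
        have hα4 : α = -4 := by
          have h4 : (4 + α) * (4 * (‖c‖ * R)) = 0 := by linear_combination hk1 - hk2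
          rcases mul_eq_zero.mp h4 with h | h
          · linarith
          · nlinarith [hc0, hR]
        rw [hα4] at hk1
        have : ‖c‖ = R := by nlinarith [hk1, hc0, hR]
        exact hcR this
  · rintro (⟨hα2, hc⟩ | ⟨hα4, hcR⟩) <;> intro p hp hp0 <;>
      rw [real_inner_smul_left, hinner p hp] <;>
      have hpn : (0:ℝ) < ‖p‖ := norm_pos_iff.mpr hp0
    · subst hc hα2
      have hpR : ‖p‖ = R := by simpa using hp
      rw [hpR]
      simp only [norm_zero]
      field_simp
      ring
    · subst hα4
      rw [hcR]
      field_simp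
      ring
end

section
/- The surface parametrized by Ψ(u,v) = (−u sin(log u) cos v, u cos(log u) cos v, u sin v) for u > 0, v ∈ R, satisfies |Ψ(u,v)| = u, and it is a (−2)-stationary surface: its mean curvature H and unit normal N satisfy H(p) = −2⟨N(p),p⟩/|p|² at every point, while the surface is not a sphere centered at the origin. -/
/-!
The parametrization is orthogonal (`F = 0`, so the mixed coefficient `M` drops out), with
`E = 1 + cos² v` and `G = u²`. For `w = Ψ_u × Ψ_v` one computes
`⟨Ψ_uu, w⟩ = -cos v (1 + cos² v)`, `⟨Ψ_vv, w⟩ = -u² cos v` and `⟨w, Ψ⟩ = u² cos v`, so with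
`n = w / |w|` both sides of the stationarity equation equal `-2 cos v / |w|`; the value of
`|w|` never needs to be computed.
-/

/-- Dot product of vectors in `ℝ³`. -/
def dot3 (x y : Fin 3 → ℝ) : ℝ := x 0 * y 0 + x 1 * y 1 + x 2 * y 2

/-- Cross product of vectors in `ℝ³`. -/
def cross3 (x y : Fin 3 → ℝ) : Fin 3 → ℝ :=
  ![x 1 * y 2 - x 2 * y 1, x 2 * y 0 - x 0 * y 2, x 0 * y 1 - x 1 * y 0]

/-- The parametrization of the example surface:
`Ψ(u,v) = (−u sin(log u) cos v, u cos(log u) cos v, u sin v)`, `u > 0`. -/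
noncomputable def exPsi (u v : ℝ) : Fin 3 → ℝ :=
  ![-u * Real.sin (Real.log u) * Real.cos v,
    u * Real.cos (Real.log u) * Real.cos v,
    u * Real.sin v]

open Real

theorem dot3_smul_left (x y : Fin 3 → ℝ) (a : ℝ) : dot3 (a • x) y = a * dot3 x y := by
  simp only [dot3, Pi.smul_apply, smul_eq_mul]; ring

theorem dot3_smul_right (x y : Fin 3 → ℝ) (a : ℝ) : dot3 x (a • y) = a * dot3 x y := by
  simp only [dot3, Pi.smul_apply, smul_eq_mul]; ring

theorem hasDerivAt_vec3 {𝕜 F : Type*} [NontriviallyNormedField 𝕜] [NormedAddCommGroup F]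
    [NormedSpace 𝕜 F] {f₀ f₁ f₂ : 𝕜 → F} {a₀ a₁ a₂ : F} {x : 𝕜} (h₀ : HasDerivAt f₀ a₀ x)
    (h₁ : HasDerivAt f₁ a₁ x) (h₂ : HasDerivAt f₂ a₂ x) :
    HasDerivAt (fun t => ![f₀ t, f₁ t, f₂ t]) ![a₀, a₁, a₂] x := by
  rw [hasDerivAt_pi]
  intro i
  fin_cases i
  exacts [h₀, h₁, h₂]

noncomputable def exPsiU (u v : ℝ) : Fin 3 → ℝ :=
  ![-((sin (log u) + cos (log u)) * cos v), (cos (log u) - sin (log u)) * cos v, sin v]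

noncomputable def exPsiV (u v : ℝ) : Fin 3 → ℝ :=
  ![u * sin (log u) * sin v, -(u * cos (log u) * sin v), u * cos v]

noncomputable def exPsiUU (u v : ℝ) : Fin 3 → ℝ :=
  ![(sin (log u) - cos (log u)) * cos v / u, -((sin (log u) + cos (log u)) * cos v / u), 0]

noncomputable def exPsiVV (u v : ℝ) : Fin 3 → ℝ :=
  ![u * sin (log u) * cos v, -(u * cos (log u) * cos v), -(u * sin v)]

section Derivatives

variable {u : ℝ} (v : ℝ)

theorem hasDerivAt_exPsi_u (hu : 0 < u) :
    HasDerivAt (fun x => exPsi x v) (exPsiU u v) u := by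
  have hlog := hasDerivAt_log hu.ne'
  refine hasDerivAt_vec3 ?_ ?_ ?_
  · refine (((hasDerivAt_neg u).mul hlog.sin).mul_const (cos v)).congr_deriv ?_
    field_simp; ring
  · refine (((hasDerivAt_id' u).mul hlog.cos).mul_const (cos v)).congr_deriv ?_
    field_simp; ring
  · simpa using (hasDerivAt_id' u).mul_const (sin v)

theorem hasDerivAt_exPsiU_u (hu : 0 < u) :
    HasDerivAt (fun x => exPsiU x v) (exPsiUU u v) u := by
  have hlog := hasDerivAt_log hu.ne'
  refine hasDerivAt_vec3 ?_ ?_ (hasDerivAt_const u (sin v))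
  · refine ((hlog.sin.add hlog.cos).mul_const (cos v)).neg.congr_deriv ?_
    field_simp; ring
  · refine ((hlog.cos.sub hlog.sin).mul_const (cos v)).congr_deriv ?_
    field_simp; ring

theorem hasDerivAt_exPsi_v : HasDerivAt (fun y => exPsi u y) (exPsiV u v) v := by
  refine hasDerivAt_vec3 ?_ ?_ ?_
  · refine ((hasDerivAt_cos v).const_mul _).congr_deriv ?_; ring
  · refine ((hasDerivAt_cos v).const_mul _).congr_deriv ?_; ring
  · exact (hasDerivAt_sin v).const_mul u

theorem hasDerivAt_exPsiV_v : HasDerivAt (fun y => exPsiV u y) (exPsiVV u v) v := by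
  refine hasDerivAt_vec3 ?_ ?_ ?_
  · exact (hasDerivAt_sin v).const_mul _
  · exact ((hasDerivAt_sin v).const_mul _).neg
  · refine ((hasDerivAt_cos v).const_mul u).congr_deriv ?_; ring

theorem deriv_exPsi_u (hu : 0 < u) : deriv (fun x => exPsi x v) u = exPsiU u v :=
  (hasDerivAt_exPsi_u v hu).deriv

theorem deriv_deriv_exPsi_u (hu : 0 < u) :
    deriv (deriv fun x => exPsi x v) u = exPsiUU u v := by
  have h : (deriv fun x => exPsi x v) =ᶠ[nhds u] fun x => exPsiU x v := by
    filter_upwards [Ioi_mem_nhds hu] with x hx using deriv_exPsi_u v hx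
  rw [h.deriv_eq]
  exact (hasDerivAt_exPsiU_u v hu).deriv

theorem deriv_exPsi_v : deriv (fun y => exPsi u y) v = exPsiV u v :=
  (hasDerivAt_exPsi_v v).deriv

theorem deriv_deriv_exPsi_v : deriv (deriv fun y => exPsi u y) v = exPsiVV u v := by
  rw [funext deriv_exPsi_v]
  exact (hasDerivAt_exPsiV_v v).deriv

end Derivatives

section FundamentalForms

variable (u v : ℝ)

theorem exPsi_dot_self : dot3 (exPsi u v) (exPsi u v) = u ^ 2 := by
  simp only [dot3, exPsi, Matrix.cons_val_zero, Matrix.cons_val_one, Matrix.cons_val_two,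
    Matrix.head_cons, Matrix.tail_cons]
  linear_combination u ^ 2 * cos v ^ 2 * sin_sq_add_cos_sq (log u) + u ^ 2 * cos_sq_add_sin_sq v

theorem exPsiU_dot_self : dot3 (exPsiU u v) (exPsiU u v) = 1 + cos v ^ 2 := by
  simp only [dot3, exPsiU, Matrix.cons_val_zero, Matrix.cons_val_one, Matrix.cons_val_two,
    Matrix.head_cons, Matrix.tail_cons]
  linear_combination 2 * cos v ^ 2 * sin_sq_add_cos_sq (log u) + cos_sq_add_sin_sq v

theorem exPsiU_dot_exPsiV : dot3 (exPsiU u v) (exPsiV u v) = 0 := by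
  simp only [dot3, exPsiU, exPsiV, Matrix.cons_val_zero, Matrix.cons_val_one,
    Matrix.cons_val_two, Matrix.head_cons, Matrix.tail_cons]
  linear_combination -u * cos v * sin v * sin_sq_add_cos_sq (log u)

theorem exPsiV_dot_self : dot3 (exPsiV u v) (exPsiV u v) = u ^ 2 := by
  simp only [dot3, exPsiV, Matrix.cons_val_zero, Matrix.cons_val_one, Matrix.cons_val_two,
    Matrix.head_cons, Matrix.tail_cons]
  linear_combination u ^ 2 * sin v ^ 2 * sin_sq_add_cos_sq (log u) + u ^ 2 * cos_sq_add_sin_sq v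

theorem exPsiUU_dot_cross3 {u : ℝ} (hu : u ≠ 0) :
    dot3 (exPsiUU u v) (cross3 (exPsiU u v) (exPsiV u v)) = -(cos v * (1 + cos v ^ 2)) := by
  simp only [dot3, cross3, exPsiUU, exPsiU, exPsiV, Matrix.cons_val_zero, Matrix.cons_val_one,
    Matrix.cons_val_two, Matrix.head_cons, Matrix.tail_cons]
  field_simp
  linear_combination (-cos v ^ 3 - cos v * (cos v ^ 2 + sin v ^ 2)) * sin_sq_add_cos_sq (log u)
    - cos v * cos_sq_add_sin_sq v

theorem exPsiVV_dot_cross3 :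
    dot3 (exPsiVV u v) (cross3 (exPsiU u v) (exPsiV u v)) = -(u ^ 2 * cos v) := by
  simp only [dot3, cross3, exPsiVV, exPsiU, exPsiV, Matrix.cons_val_zero, Matrix.cons_val_one,
    Matrix.cons_val_two, Matrix.head_cons, Matrix.tail_cons]
  linear_combination -u ^ 2 * cos v * (cos v ^ 2 + sin v ^ 2) * sin_sq_add_cos_sq (log u)
    - u ^ 2 * cos v * cos_sq_add_sin_sq v

theorem cross3_dot_exPsi :
    dot3 (cross3 (exPsiU u v) (exPsiV u v)) (exPsi u v) = u ^ 2 * cos v := by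
  simp only [dot3, cross3, exPsi, exPsiU, exPsiV, Matrix.cons_val_zero, Matrix.cons_val_one,
    Matrix.cons_val_two, Matrix.head_cons, Matrix.tail_cons]
  linear_combination u ^ 2 * cos v * (cos v ^ 2 + sin v ^ 2) * sin_sq_add_cos_sq (log u)
    + u ^ 2 * cos v * cos_sq_add_sin_sq v

end FundamentalForms

theorem sqrt_dot3_exPsi {u : ℝ} (v : ℝ) (hu : 0 < u) :
    Real.sqrt (dot3 (exPsi u v) (exPsi u v)) = u := by
  rw [exPsi_dot_self, sqrt_sq hu.le]

/-- The surface `Ψ(u,v) = (−u sin(log u) cos v, u cos(log u) cos v, u sin v)`,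
`u > 0`, satisfies `‖Ψ(u,v)‖ = u`; it is a `(−2)`-stationary surface, i.e. its mean
curvature `H = (GL − 2FM + EN̂)/(EG − F²)` (sum of the principal curvatures) and unit
normal `n` satisfy `H = −2 ⟨n, Ψ⟩/‖Ψ‖²` at every point; and it is not a sphere
centered at the origin. -/
theorem example_minus_two_stationary :
    (∀ u v : ℝ, 0 < u → Real.sqrt (dot3 (exPsi u v) (exPsi u v)) = u) ∧
    (∀ u v : ℝ, 0 < u →
      let Ψu := deriv (fun u' => exPsi u' v) u
      let Ψv := deriv (fun v' => exPsi u v') v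
      let Ψuu := deriv (deriv (fun u' => exPsi u' v)) u
      let Ψvv := deriv (deriv (fun v' => exPsi u v')) v
      let Ψuv := deriv (fun v' => deriv (fun u' => exPsi u' v') u) v
      let E := dot3 Ψu Ψu
      let F := dot3 Ψu Ψv
      let G := dot3 Ψv Ψv
      let w := cross3 Ψu Ψv
      let n := (Real.sqrt (dot3 w w))⁻¹ • w
      let L := dot3 Ψuu n
      let M := dot3 Ψuv n
      let Nhat := dot3 Ψvv n
      (G * L - 2 * F * M + E * Nhat) / (E * G - F ^ 2) =
        -2 * dot3 n (exPsi u v) / dot3 (exPsi u v) (exPsi u v)) ∧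
    ¬ ∃ R : ℝ, ∀ u v : ℝ, 0 < u →
        Real.sqrt (dot3 (exPsi u v) (exPsi u v)) = R := by
  refine ⟨fun u v hu => sqrt_dot3_exPsi v hu, fun u v hu => ?_, ?_⟩
  · simp only [deriv_deriv_exPsi_u v hu, deriv_deriv_exPsi_v, deriv_exPsi_u v hu, deriv_exPsi_v,
      dot3_smul_left, dot3_smul_right, exPsiU_dot_self, exPsiU_dot_exPsiV, exPsiV_dot_self,
      exPsiUU_dot_cross3 v hu.ne', exPsiVV_dot_cross3, cross3_dot_exPsi, exPsi_dot_self]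
    field_simp
    ring
  · rintro ⟨R, hR⟩
    have h₁ := (sqrt_dot3_exPsi 0 one_pos).symm.trans (hR 1 0 one_pos)
    have h₂ := (sqrt_dot3_exPsi 0 two_pos).symm.trans (hR 2 0 two_pos)
    linarith
end

section
/- If smooth functions β : I → S² ⊂ R^3 satisfy the identity det(β'(s), β(s), β''(s)) = 0 for all s, and β' never vanishes, then β parametrizes a great circle of the unit sphere; i.e., there is a fixed unit vector w with ⟨β(s), w⟩ = 0 for all s. -/
open RealInnerProductSpace

open Matrix

lemma my_cross_cross_cross (a b c : Fin 3 → ℝ) :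
    (a ⨯₃ c) ⨯₃ (a ⨯₃ b) = (a ⬝ᵥ (c ⨯₃ b)) • a := by
  funext i
  fin_cases i <;>
    simp [cross_apply, vec3_dotProduct, Matrix.vecHead, Matrix.vecTail, Pi.smul_apply] <;> ring

lemma my_parallel (x y : Fin 3 → ℝ) (h : x ⨯₃ y = 0) :
    (y ⬝ᵥ y) • x = (x ⬝ᵥ y) • y := by
  have h0 := congrFun h 0
  have h1 := congrFun h 1
  have h2 := congrFun h 2
  simp [cross_apply] at h0 h1 h2
  funext i
  fin_cases i <;> simp [vec3_dotProduct, Pi.smul_apply]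
  · linear_combination y 1 * h2 - y 2 * h1
  · linear_combination y 2 * h0 - y 0 * h2
  · linear_combination y 0 * h1 - y 1 * h0

noncomputable def crossCLM : EuclideanSpace ℝ (Fin 3) →L[ℝ] EuclideanSpace ℝ (Fin 3) →L[ℝ] EuclideanSpace ℝ (Fin 3) :=
  LinearMap.toContinuousLinearMap
  { toFun := fun u => LinearMap.toContinuousLinearMap
      (show EuclideanSpace ℝ (Fin 3) →ₗ[ℝ] EuclideanSpace ℝ (Fin 3) from
        (WithLp.linearEquiv 2 ℝ (Fin 3 → ℝ)).symm.toLinearMap ∘ₗ crossProduct u ∘ₗ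
          (WithLp.linearEquiv 2 ℝ (Fin 3 → ℝ)).toLinearMap)
    map_add' := by
      intro u v; ext w i
      fin_cases i <;>
        simp [cross_apply, Matrix.vecHead, Matrix.vecTail, PiLp.add_apply]
    map_smul' := by
      intro c u; ext w i
      fin_cases i <;>
        simp [cross_apply, Matrix.vecHead, Matrix.vecTail, PiLp.smul_apply] }

@[simp] lemma crossCLM_apply (u v : EuclideanSpace ℝ (Fin 3)) :
    crossCLM u v = crossProduct u v := rfl

lemma my_inner_eq_dot (x y : EuclideanSpace ℝ (Fin 3)) : ⟪x, y⟫ = x ⬝ᵥ y := by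
  simp [PiLp.inner_apply, dotProduct, mul_comm]

/-- If a smooth curve `β` on the unit sphere `S² ⊂ ℝ³` with nowhere vanishing
derivative satisfies `det(β', β, β'') = 0` on an open connected interval `I`, then
`β` parametrizes (part of) a great circle: there is a fixed unit vector `w` with
`⟪β(s), w⟫ = 0` for all `s ∈ I`. -/
theorem spherical_curve_great_circle (I : Set ℝ) (hI : IsOpen I)
    (hconn : IsPreconnected I) (β : ℝ → EuclideanSpace ℝ (Fin 3))
    (hβ : ContDiffOn ℝ (⊤ : ℕ∞) β I)
    (hsphere : ∀ s ∈ I, ‖β s‖ = 1)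
    (hreg : ∀ s ∈ I, deriv β s ≠ 0)
    (hdet : ∀ s ∈ I,
      (Matrix.of ![fun i => deriv β s i, fun i => β s i,
        fun i => deriv (deriv β) s i]).det = 0) :
    ∃ w : EuclideanSpace ℝ (Fin 3), ‖w‖ = 1 ∧ ∀ s ∈ I, ⟪β s, w⟫ = 0 := by
  rcases I.eq_empty_or_nonempty with rfl | ⟨s₀, hs₀⟩
  · exact ⟨EuclideanSpace.single 0 1, by simp [EuclideanSpace.norm_single], by simp⟩
  set β1 := deriv β with hβ1def
  set β2 := deriv β1 with hβ2def
  -- differentiability facts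
  have hβ1 : ContDiffOn ℝ (⊤ : ℕ∞) β1 I := hβ.deriv_of_isOpen hI (by simp)
  have hd1 : ∀ s ∈ I, HasDerivAt β (β1 s) s := fun s hs =>
    ((hβ.differentiableOn (by simp)).differentiableAt (hI.mem_nhds hs)).hasDerivAt
  have hd2 : ∀ s ∈ I, HasDerivAt β1 (β2 s) s := fun s hs =>
    ((hβ1.differentiableOn (by simp)).differentiableAt (hI.mem_nhds hs)).hasDerivAt
  -- β ⬝ β = 1 on I
  have hββ : ∀ s ∈ I, (β s ⬝ᵥ β s) = 1 := by
    intro s hs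
    have := real_inner_self_eq_norm_mul_norm (β s)
    rw [my_inner_eq_dot] at this
    rw [this, hsphere s hs, one_mul]
  -- β ⬝ β' = 0 on I
  have horth : ∀ s ∈ I, (β s ⬝ᵥ β1 s) = 0 := by
    intro s hs
    have hq : HasDerivAt (fun t => ⟪β t, β t⟫) (⟪β s, β1 s⟫ + ⟪β1 s, β s⟫) s :=
      (hd1 s hs).inner ℝ (hd1 s hs)
    have hconst : HasDerivAt (fun t => ⟪β t, β t⟫) 0 s := by
      have hev : (fun t => ⟪β t, β t⟫) =ᶠ[nhds s] (fun _ => (1 : ℝ)) := by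
        filter_upwards [hI.mem_nhds hs] with t ht
        rw [my_inner_eq_dot, hββ t ht]
      exact (hasDerivAt_const s (1 : ℝ)).congr_of_eventuallyEq hev
    have h0 : ⟪β s, β1 s⟫ + ⟪β1 s, β s⟫ = 0 := hq.unique hconst
    have h2 : ⟪β s, β1 s⟫ = 0 := by
      have hc := real_inner_comm (β s) (β1 s)
      linarith
    rw [my_inner_eq_dot] at h2; exact h2
  -- the (unnormalized) binormal
  set v : ℝ → EuclideanSpace ℝ (Fin 3) := fun s => crossCLM (β s) (β1 s) with hvdef
  set v' : ℝ → EuclideanSpace ℝ (Fin 3) := fun s => crossCLM (β s) (β2 s) with hv'def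
  have hdv : ∀ s ∈ I, HasDerivAt v (v' s) s := by
    intro s hs
    have hc : HasDerivAt (fun t => crossCLM (β t)) (crossCLM (β1 s)) s :=
      crossCLM.hasFDerivAt.comp_hasDerivAt s (hd1 s hs)
    have := hc.clm_apply (hd2 s hs)
    have h0 : crossCLM (β1 s) (β1 s) = 0 := by ext i; simp [crossCLM_apply, cross_self]
    simpa [cross_self, h0] using this
  -- v ⬝ v = β1 ⬝ β1 ≠ 0
  have hvv : ∀ s ∈ I, (v s ⬝ᵥ v s) = β1 s ⬝ᵥ β1 s := by
    intro s hs
    have := cross_dot_cross (β s) (β1 s) (β s) (β1 s)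
    simp only [hvdef, crossCLM_apply]
    rw [this, hββ s hs, horth s hs]
    ring
  have hvne : ∀ s ∈ I, (v s ⬝ᵥ v s) ≠ 0 := by
    intro s hs
    rw [hvv s hs]
    intro h
    exact hreg s hs (by simpa using dotProduct_self_eq_zero.mp h)
  -- det condition ⇒ β ⬝ᵥ (β2 ⨯₃ β1) = 0
  have hdet' : ∀ s ∈ I, (β s : Fin 3 → ℝ) ⬝ᵥ (β2 s ⨯₃ β1 s) = 0 := by
    intro s hs
    have h := hdet s hs
    rw [triple_product_eq_det]
    rw [Matrix.det_fin_three] at h; erw [Matrix.det_fin_three]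
    simp only [Matrix.of_apply, Matrix.cons_val', Matrix.cons_val_zero, Matrix.cons_val_one,
      Matrix.head_cons, Matrix.empty_val', Matrix.cons_val_fin_one, Matrix.head_fin_const,
      Matrix.cons_val_two, Matrix.tail_cons] at h ⊢
    linear_combination h
  -- v' is parallel to v
  have hpar : ∀ s ∈ I, (v s ⬝ᵥ v s) • v' s = (v' s ⬝ᵥ v s) • v s := by
    intro s hs
    have hcc : ((β s : Fin 3 → ℝ) ⨯₃ β2 s) ⨯₃ ((β s : Fin 3 → ℝ) ⨯₃ β1 s) = 0 := by
      rw [my_cross_cross_cross, hdet' s hs, zero_smul]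
    apply WithLp.ofLp_injective 2
    simp only [WithLp.ofLp_smul, hvdef, hv'def, crossCLM_apply]
    exact my_parallel _ _ hcc
  -- v' s = k s • v s
  have hkey : ∀ s ∈ I, v' s = ((v' s ⬝ᵥ v s) / (v s ⬝ᵥ v s)) • v s := by
    intro s hs
    have h := hpar s hs
    have hne := hvne s hs
    calc v' s = (v s ⬝ᵥ v s)⁻¹ • ((v s ⬝ᵥ v s) • v' s) := by
          rw [inv_smul_smul₀ hne]
      _ = (v s ⬝ᵥ v s)⁻¹ • ((v' s ⬝ᵥ v s) • v s) := by rw [h]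
      _ = ((v' s ⬝ᵥ v s) / (v s ⬝ᵥ v s)) • v s := by
          rw [smul_smul, div_eq_inv_mul]
  -- scalar coefficient
  set k : ℝ → ℝ := fun s => (v' s ⬝ᵥ v s) / (v s ⬝ᵥ v s) with hkdef
  have hkey' : ∀ s ∈ I, v' s = k s • v s := hkey
  -- q = ⟪v, v⟫ and r = ‖v‖
  set q : ℝ → ℝ := fun t => ⟪v t, v t⟫ with hqdef
  have hq_dot : ∀ t, q t = v t ⬝ᵥ v t := fun t => my_inner_eq_dot _ _
  have hqpos : ∀ s ∈ I, 0 < q s := by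
    intro s hs
    rcases lt_or_eq_of_le (real_inner_self_nonneg (x := v s)) with h | h
    · exact h
    · exact absurd ((hq_dot s).symm.trans h.symm) (hvne s hs)
  set r : ℝ → ℝ := fun t => Real.sqrt (q t) with hrdef
  have hrpos : ∀ s ∈ I, 0 < r s := fun s hs => Real.sqrt_pos.mpr (hqpos s hs)
  have hrsq : ∀ s ∈ I, r s ^ 2 = q s := fun s hs => Real.sq_sqrt (hqpos s hs).le
  have hrnorm : ∀ t, r t = ‖v t‖ := fun t => (norm_eq_sqrt_real_inner (v t)).symm
  -- derivative of q
  have hdq : ∀ s ∈ I, HasDerivAt q (2 * (k s * q s)) s := by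
    intro s hs
    have h := (hdv s hs).inner ℝ (hdv s hs)
    have e : ⟪v s, v' s⟫ + ⟪v' s, v s⟫ = 2 * (k s * q s) := by
      rw [hkey' s hs, real_inner_smul_right, real_inner_smul_left]
      ring
    rwa [e] at h
  -- derivative of r
  have hdr : ∀ s ∈ I, HasDerivAt r (k s * r s) s := by
    intro s hs
    have h := (Real.hasDerivAt_sqrt (hqpos s hs).ne').comp s (hdq s hs)
    have e : 1 / (2 * Real.sqrt (q s)) * (2 * (k s * q s)) = k s * r s := by
      have hrs : Real.sqrt (q s) = r s := rfl
      rw [hrs, ← hrsq s hs]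
      have hr := (hrpos s hs).ne'
      generalize k s = K
      field_simp
    rwa [e] at h
  -- the unit binormal
  set B : ℝ → EuclideanSpace ℝ (Fin 3) := fun t => (r t)⁻¹ • v t with hBdef
  have hB0 : ∀ s ∈ I, HasDerivAt B 0 s := by
    intro s hs
    have h1 : HasDerivAt (fun t => (r t)⁻¹) (-(k s * r s) / (r s) ^ 2) s :=
      (hdr s hs).inv (hrpos s hs).ne'
    have h2 := h1.smul (hdv s hs)
    rw [hkey' s hs] at h2
    have e : (r s)⁻¹ • (k s • v s) + (-(k s * r s) / r s ^ 2) • v s = 0 := by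
      rw [smul_smul, ← add_smul]
      have : (r s)⁻¹ * k s + -(k s * r s) / r s ^ 2 = 0 := by
        have hr := (hrpos s hs).ne'
        generalize k s = K
        field_simp
        ring
      rw [this, zero_smul]
    rwa [e] at h2
  -- B is constant on I
  have hconv : Convex ℝ I := (convex_iff_ordConnected (𝕜 := ℝ)).mpr hconn.ordConnected
  have hBdiff : DifferentiableOn ℝ B I := fun s hs =>
    ((hB0 s hs).differentiableAt).differentiableWithinAt
  have hBf : ∀ s ∈ I, fderivWithin ℝ B I s = 0 := by
    intro s hs
    rw [((hB0 s hs).hasFDerivAt.hasFDerivWithinAt).fderivWithin (hI.uniqueDiffWithinAt hs)]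
    ext x
    simp
  have hBconst : ∀ s ∈ I, B s = B s₀ := fun s hs =>
    hconv.is_const_of_fderivWithin_eq_zero hBdiff hBf hs hs₀
  refine ⟨B s₀, ?_, ?_⟩
  · rw [hBdef]
    simp only []
    rw [norm_smul, Real.norm_eq_abs, abs_of_pos (inv_pos.mpr (hrpos s₀ hs₀)), ← hrnorm s₀,
      inv_mul_cancel₀ (hrpos s₀ hs₀).ne']
  · intro s hs
    rw [← hBconst s hs, hBdef]
    simp only []
    rw [real_inner_smul_right, my_inner_eq_dot]
    have : (β s : Fin 3 → ℝ) ⬝ᵥ v s = 0 := by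
      simp only [hvdef, crossCLM_apply]
      exact dot_self_cross _ _
    rw [this, mul_zero]
end
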